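/- arXiv:1503.01833 — 5 statements merged into one kernel-verified Lean document; each statement's English description precedes it below -/
import Mathlib

section
/- In the Brauer algebra Br(G₂), the relation r₁r₀e₁r₀r₁e₀ = δe₀ holds. -/
/-! Multiplying `r₀e₁e₀ = r₁e₀` by the involution `r₀` gives `r₀r₁e₀ = e₁e₀`, so the left side
becomes `r₁r₀e₁e₁e₀ = δ r₁r₀e₁e₀ = δ r₁r₁e₀ = δe₀`, using `e₁² = δe₁` and that `δ` is central. -/

theorem mul_eq_of_mul_self_eq_one {M : Type*} [Monoid M] {r a b : M} (hr : r * r = 1)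
    (h : r * a = b) : r * b = a := by
  rw [← h, ← mul_assoc, hr, one_mul]

theorem brauerG2_rel_delta_e0_general {A : Type*} [Ring A] (δ r0 r1 e0 e1 : A)
    (hδ : ∀ x : A, δ * x = x * δ)
    (h1 : r0 * r0 = 1) (h2 : r1 * r1 = 1)
    (h8 : e1 * e1 = δ * e1)
    (h9 : r0 * e1 * e0 = r1 * e0) :
    r1 * r0 * e1 * r0 * r1 * e0 = δ * e0 := by
  have hr0e1e0 : r0 * (e1 * e0) = r1 * e0 := by rw [← mul_assoc, h9]
  have hr0r1e0 : r0 * (r1 * e0) = e1 * e0 := mul_eq_of_mul_self_eq_one h1 hr0e1e0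
  calc r1 * r0 * e1 * r0 * r1 * e0
      = r1 * r0 * (e1 * (r0 * (r1 * e0))) := by simp only [mul_assoc]
    _ = r1 * r0 * (e1 * e1 * e0) := by rw [hr0r1e0, mul_assoc e1]
    _ = r1 * r0 * (δ * (e1 * e0)) := by rw [h8]; simp only [mul_assoc]
    _ = δ * (r1 * (r0 * (e1 * e0))) := by rw [← mul_assoc, ← hδ, mul_assoc, mul_assoc]
    _ = δ * e0 := by rw [hr0e1e0, ← mul_assoc r1, h2, one_mul]

/-- In Br(G₂), r₁r₀e₁r₀r₁e₀ = δe₀. -/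
theorem brauerG2_rel_delta_e0 {A : Type*} [Ring A] (δ r0 r1 e0 e1 : A)
    (hδ : ∀ x : A, δ * x = x * δ) (hδu : IsUnit δ)
    (h1 : r0 * r0 = 1) (h2 : r1 * r1 = 1)
    (h3 : r0 * e0 = e0) (h4 : e0 * r0 = e0)
    (h5 : r1 * e1 = e1) (h6 : e1 * r1 = e1)
    (h7 : e0 * e0 = δ ^ 3 * e0) (h8 : e1 * e1 = δ * e1)
    (h9 : r0 * e1 * e0 = r1 * e0) (h10 : e0 * e1 * r0 = e0 * r1)
    (h11 : e1 * r0 * e1 * r0 * e1 = e1)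
    (h12 : e1 * r0 * e1 * r0 * r1 = e1 * r0 * r1 * r0)
    (h13 : e0 * r1 * e0 = δ ^ 2 * e0)
    (h14 : r1 * r0 * e1 * r0 * e1 = r0 * r1 * r0 * e1)
    (h15 : (r1 * r0) ^ 6 = 1) :
    r1 * r0 * e1 * r0 * r1 * e0 = δ * e0 :=
  brauerG2_rel_delta_e0_general δ r0 r1 e0 e1 hδ h1 h2 h8 h9
end

section
/- In the Brauer algebra Br(G₂), the elements r₁r₀r₁r₀r₁ and r₀ commute with e₀ and satisfy (r₁r₀r₁r₀r₁)e₀(r₁r₀r₁r₀r₁) = e₀ and r₀e₀r₀ = e₀. -/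
/-! The word `w = r₁r₀r₁r₀r₁` absorbs `e₀` on both sides: the relation `r₀e₁e₀ = r₁e₀` lets one
trade the last `r₁` for `r₀e₁`, the middle `r₁` is then swallowed by `r₁e₁ = e₁`, and the same
relation read backwards (`e₁e₀ = r₀r₁e₀`) collapses the rest, as `r₀` and `r₁` are involutions.
The mirror relations `e₀e₁r₀ = e₀r₁`, `e₁r₁ = e₁` give `e₀w = e₀` in the opposite monoid, `w`
being a palindrome. -/

namespace BrauerG2

variable {M : Type*} [Monoid M] {r0 r1 e0 e1 : M}

theorem r1r0r1r0r1_mul_e0 (hr0 : r0 * r0 = 1) (hr1 : r1 * r1 = 1)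
    (he1 : r1 * e1 = e1) (hswap : r0 * e1 * e0 = r1 * e0) :
    r1 * r0 * r1 * r0 * r1 * e0 = e0 := by
  have he1e0 : e1 * e0 = r0 * r1 * e0 := by
    rw [mul_assoc r0, ← hswap, ← mul_assoc, ← mul_assoc, hr0, one_mul]
  calc r1 * r0 * r1 * r0 * r1 * e0
      = r1 * r0 * r1 * (r0 * r0) * e1 * e0 := by simp only [mul_assoc, ← hswap]
    _ = r1 * r0 * (r1 * e1) * e0 := by rw [hr0]; simp only [mul_one, mul_assoc]
    _ = r1 * (r0 * r0) * r1 * e0 := by rw [he1, mul_assoc, he1e0]; simp only [mul_assoc]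
    _ = e0 := by rw [hr0, mul_one, hr1, one_mul]

theorem e0_mul_r1r0r1r0r1 (hr0 : r0 * r0 = 1) (hr1 : r1 * r1 = 1)
    (he1 : e1 * r1 = e1) (hswap : e0 * e1 * r0 = e0 * r1) :
    e0 * (r1 * r0 * r1 * r0 * r1) = e0 := by
  have key := r1r0r1r0r1_mul_e0 (r0 := MulOpposite.op r0) (r1 := MulOpposite.op r1)
    (e0 := MulOpposite.op e0) (e1 := MulOpposite.op e1)
    (by rw [← MulOpposite.op_mul, hr0, MulOpposite.op_one])
    (by rw [← MulOpposite.op_mul, hr1, MulOpposite.op_one])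
    (by rw [← MulOpposite.op_mul, he1])
    (by simp only [← MulOpposite.op_mul, ← mul_assoc, hswap])
  simpa only [← MulOpposite.op_mul, ← mul_assoc, MulOpposite.op_inj] using key

end BrauerG2

theorem brauerG2_stab_e0_general {A : Type*} [Ring A] (r0 r1 e0 e1 : A)
    (h1 : r0 * r0 = 1) (h2 : r1 * r1 = 1)
    (h3 : r0 * e0 = e0) (h4 : e0 * r0 = e0)
    (h5 : r1 * e1 = e1) (h6 : e1 * r1 = e1)
    (h9 : r0 * e1 * e0 = r1 * e0) (h10 : e0 * e1 * r0 = e0 * r1) :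
    (r1 * r0 * r1 * r0 * r1) * e0 = e0 * (r1 * r0 * r1 * r0 * r1) ∧ r0 * e0 = e0 * r0 ∧ (r1 * r0 * r1 * r0 * r1) * e0 * (r1 * r0 * r1 * r0 * r1) = e0 ∧ r0 * e0 * r0 = e0 := by
  have hw_left := BrauerG2.r1r0r1r0r1_mul_e0 h1 h2 h5 h9
  have hw_right := BrauerG2.e0_mul_r1r0r1r0r1 h1 h2 h6 h10
  exact ⟨by rw [hw_left, hw_right], by rw [h3, h4], by rw [hw_left, hw_right],
    by rw [h3, h4]⟩

/-- In Br(G₂), r₁r₀r₁r₀r₁ and r₀ commute with e₀, (r₁r₀r₁r₀r₁)e₀(r₁r₀r₁r₀r₁) = e₀ and r₀e₀r₀ = e₀. -/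
theorem brauerG2_stab_e0 {A : Type*} [Ring A] (δ r0 r1 e0 e1 : A)
    (hδ : ∀ x : A, δ * x = x * δ) (hδu : IsUnit δ)
    (h1 : r0 * r0 = 1) (h2 : r1 * r1 = 1)
    (h3 : r0 * e0 = e0) (h4 : e0 * r0 = e0)
    (h5 : r1 * e1 = e1) (h6 : e1 * r1 = e1)
    (h7 : e0 * e0 = δ ^ 3 * e0) (h8 : e1 * e1 = δ * e1)
    (h9 : r0 * e1 * e0 = r1 * e0) (h10 : e0 * e1 * r0 = e0 * r1)
    (h11 : e1 * r0 * e1 * r0 * e1 = e1)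
    (h12 : e1 * r0 * e1 * r0 * r1 = e1 * r0 * r1 * r0)
    (h13 : e0 * r1 * e0 = δ ^ 2 * e0)
    (h14 : r1 * r0 * e1 * r0 * e1 = r0 * r1 * r0 * e1)
    (h15 : (r1 * r0) ^ 6 = 1) :
    (r1 * r0 * r1 * r0 * r1) * e0 = e0 * (r1 * r0 * r1 * r0 * r1) ∧ r0 * e0 = e0 * r0 ∧ (r1 * r0 * r1 * r0 * r1) * e0 * (r1 * r0 * r1 * r0 * r1) = e0 ∧ r0 * e0 * r0 = e0 :=
  brauerG2_stab_e0_general r0 r1 e0 e1 h1 h2 h3 h4 h5 h6 h9 h10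
end

section
/- In the Brauer algebra Br(D₄) of simply laced type, the elements R₁R₂R₄ and E₃ satisfy the relation (R₁R₂R₄)E₃E₁E₂E₄ = R₃E₁E₂E₄, corresponding to the image under φ of the G₂-relation r₀e₁e₀ = r₁e₀. -/
/-!
Write `X = E₁E₂E₄`. Since `E₁, E₂, E₄` commute, `X` starts with each of `E₁, E₂, E₄`, so the
relation `RⱼR₃Eⱼ = E₃Eⱼ` for the three neighbours `j` of node 3 gives `E₃X = RⱼR₃X`. Taking
`j = 1` and cancelling `R₁` against `R₂R₄` turns the left side into `R₂R₄R₃X`; then `j = 4`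
and `j = 2` give `R₂R₄R₃X = R₂E₃X = R₂R₂R₃X = R₃X`.
-/

/-- The nodes of the Dynkin diagram D₄. -/
def nodesD4 : Set ℕ := {1, 2, 3, 4}

/-- Adjacency in D₄: node 3 is adjacent to 1, 2, 4, which are pairwise non-adjacent. -/
def adjD4 (i j : ℕ) : Prop :=
  i ∈ nodesD4 ∧ j ∈ nodesD4 ∧ i ≠ j ∧ (i = 3 ∨ j = 3)

theorem mul_mul_mul_mul_of_commute_of_mul_self {M : Type*} [Monoid M] {a b c : M}
    (hab : Commute a b) (hac : Commute a c) (ha : a * a = 1) (x : M) :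
    a * b * c * (a * x) = b * (c * x) := by
  rw [mul_assoc a, (hab.mul_right hac).eq, ← mul_assoc, mul_assoc (b * c), ha, mul_one,
    mul_assoc]

theorem brauerD4_phi_rel_general {A : Type*} [Ring A] (R E : ℕ → A)
    (hR : ∀ i ∈ nodesD4, R i * R i = 1)
    (hnonadj : ∀ i ∈ nodesD4, ∀ j ∈ nodesD4, i ≠ j → ¬ adjD4 i j →
      R i * R j = R j * R i ∧ E i * R j = R j * E i ∧ E i * E j = E j * E i)
    (hadj : ∀ i j, adjD4 i j →
      R i * R j * R i = R j * R i * R j ∧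
      R j * R i * E j = E i * E j ∧
      R i * E j * R i = R j * E i * R j) :
    R 1 * R 2 * R 4 * (E 3 * (E 1 * E 2 * E 4)) = R 3 * (E 1 * E 2 * E 4) := by
  have hE3 : ∀ j, adjD4 3 j → ∀ y, E 3 * (E j * y) = R j * (R 3 * (E j * y)) := fun j hj y => by
    rw [← mul_assoc, ← (hadj 3 j hj).2.1, mul_assoc, mul_assoc]
  obtain ⟨hR12, -, hE12⟩ := hnonadj 1 (by simp [nodesD4]) 2 (by simp [nodesD4]) (by decide)
    (by simp [adjD4])
  obtain ⟨hR14, -, hE14⟩ := hnonadj 1 (by simp [nodesD4]) 4 (by simp [nodesD4]) (by decide)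
    (by simp [adjD4])
  obtain ⟨-, -, hE24⟩ := hnonadj 2 (by simp [nodesD4]) 4 (by simp [nodesD4]) (by decide)
    (by simp [adjD4])
  have hX1 : E 1 * E 2 * E 4 = E 1 * (E 2 * E 4) := mul_assoc _ _ _
  have hX2 : E 1 * E 2 * E 4 = E 2 * (E 1 * E 4) := by rw [hE12, mul_assoc]
  have hX4 : E 1 * E 2 * E 4 = E 4 * (E 1 * E 2) := (Commute.mul_left hE14 hE24).eq
  set X := E 1 * E 2 * E 4
  calc R 1 * R 2 * R 4 * (E 3 * X)
      = R 1 * R 2 * R 4 * (R 1 * (R 3 * X)) := by rw [hX1, hE3 1 (by simp [adjD4, nodesD4])]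
    _ = R 2 * (R 4 * (R 3 * X)) :=
        mul_mul_mul_mul_of_commute_of_mul_self hR12 hR14 (hR 1 (by simp [nodesD4])) _
    _ = R 2 * (E 3 * X) := by rw [hX4, hE3 4 (by simp [adjD4, nodesD4])]
    _ = R 2 * (R 2 * (R 3 * X)) := by rw [hX2, hE3 2 (by simp [adjD4, nodesD4])]
    _ = R 3 * X := by rw [← mul_assoc, hR 2 (by simp [nodesD4]), one_mul]

/-- In Br(D₄), (R₁R₂R₄)E₃(E₁E₂E₄) = R₃(E₁E₂E₄), the image under φ of the G₂ relation r₀e₁e₀ = r₁e₀. -/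
theorem brauerD4_phi_rel {A : Type*} [Ring A] (δ : A) (R E : ℕ → A)
    (hδ : ∀ x : A, δ * x = x * δ) (hδu : IsUnit δ)
    (hR : ∀ i ∈ nodesD4, R i * R i = 1)
    (hE : ∀ i ∈ nodesD4, E i * E i = δ * E i)
    (hRE : ∀ i ∈ nodesD4, R i * E i = E i ∧ E i * R i = E i)
    (hnonadj : ∀ i ∈ nodesD4, ∀ j ∈ nodesD4, i ≠ j → ¬ adjD4 i j →
      R i * R j = R j * R i ∧ E i * R j = R j * E i ∧ E i * E j = E j * E i)
    (hadj : ∀ i j, adjD4 i j →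
      R i * R j * R i = R j * R i * R j ∧
      R j * R i * E j = E i * E j ∧
      R i * E j * R i = R j * E i * R j) :
    R 1 * R 2 * R 4 * (E 3 * (E 1 * E 2 * E 4)) = R 3 * (E 1 * E 2 * E 4) :=
  brauerD4_phi_rel_general R E hR hnonadj hadj
end

section
/- In a Brauer algebra of simply laced type Q, for nodes i ∼ j (adjacent), the relations EᵢRⱼRᵢ = EᵢEⱼ, EᵢRⱼEᵢ = Eᵢ, and EᵢEⱼEᵢ = Eᵢ follow from the defining relations. -/
/-! With `u = Rⱼ Rᵢ`, whose inverse is `Rᵢ Rⱼ`, the relation `Rᵢ Eⱼ Rᵢ = Rⱼ Eᵢ Rⱼ` says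
`Eᵢ = u Eⱼ u⁻¹`, while `Rⱼ Rᵢ Eⱼ = Eᵢ Eⱼ` says `u Eⱼ = Eᵢ Eⱼ`. Hence `Eᵢ u = u Eⱼ = Eᵢ Eⱼ`, and
the other two relations follow by absorbing `Rᵢ` into `Eᵢ`. -/

section Monoid

variable {M : Type*} [Monoid M]

theorem conj_conj_eq_of_mul_self_eq_one {r a b : M} (hr : r * r = 1) (h : a = r * b * r) :
    r * a * r = b := by
  rw [h, ← mul_assoc, ← mul_assoc, hr, one_mul, mul_assoc, hr, mul_one]

theorem mul_eq_mul_of_eq_mul_mul {u v e f : M} (hvu : v * u = 1) (h : e = u * f * v) :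
    e * u = u * f := by
  rw [h, mul_assoc, hvu, mul_one]

theorem mul_mul_mul_mul_eq_one {r s : M} (hr : r * r = 1) (hs : s * s = 1) :
    r * s * (s * r) = 1 := by
  rw [mul_assoc, ← mul_assoc s, hs, one_mul, hr]

end Monoid

theorem brauer_simply_laced_adjacent_rels_general {A : Type*} [Ring A]
    (Ri Rj Ei Ej : A)
    (hRi : Ri * Ri = 1) (hRj : Rj * Rj = 1)
    (hERi : Ei * Ri = Ei)
    (hRRE1 : Rj * Ri * Ej = Ei * Ej) (hRRE2 : Ri * Rj * Ei = Ej * Ei)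
    (hRER : Ri * Ej * Ri = Rj * Ei * Rj) :
    Ei * Rj * Ri = Ei * Ej ∧ Ei * Rj * Ei = Ei ∧ Ei * Ej * Ei = Ei := by
  have hconj : Ei = Rj * Ri * Ej * (Ri * Rj) := by
    rw [← conj_conj_eq_of_mul_self_eq_one hRj hRER]
    simp only [mul_assoc]
  have hERR : Ei * Rj * Ri = Ei * Ej := by
    rw [mul_assoc, mul_eq_mul_of_eq_mul_mul (mul_mul_mul_mul_eq_one hRi hRj) hconj, hRRE1]
  have hERE : Ei * Rj * Ei = Ei := by
    calc Ei * Rj * Ei = Ei * (Rj * Rj) * Ri * Ej * (Ri * Rj) := by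
          nth_rw 2 [hconj]
          simp only [mul_assoc]
      _ = Rj * Ri * Ej * (Ri * Rj) := by rw [hRj, mul_one, hERi, hRRE1]
      _ = Ei := hconj.symm
  refine ⟨hERR, hERE, ?_⟩
  calc Ei * Ej * Ei = Ei * Ri * Rj * Ei := by rw [mul_assoc Ei Ej, ← hRRE2]; simp only [mul_assoc]
    _ = Ei := by rw [hERi, hERE]

/-- In a Brauer algebra of simply laced type Q, for adjacent nodes i ∼ j
(with generators Rᵢ, Rⱼ, Eᵢ, Eⱼ and loop parameter δ, satisfying the defining
relations relevant to the pair {i,j}), the relations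
EᵢRⱼRᵢ = EᵢEⱼ, EᵢRⱼEᵢ = Eᵢ, EᵢEⱼEᵢ = Eᵢ follow. -/
theorem brauer_simply_laced_adjacent_rels {A : Type*} [Ring A]
    (δ Ri Rj Ei Ej : A)
    (hδ : ∀ x : A, δ * x = x * δ) (hδu : IsUnit δ)
    (hRi : Ri * Ri = 1) (hRj : Rj * Rj = 1)
    (hEi : Ei * Ei = δ * Ei) (hEj : Ej * Ej = δ * Ej)
    (hREi : Ri * Ei = Ei) (hERi : Ei * Ri = Ei)
    (hREj : Rj * Ej = Ej) (hERj : Ej * Rj = Ej)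
    (hbraid : Ri * Rj * Ri = Rj * Ri * Rj)
    (hRRE1 : Rj * Ri * Ej = Ei * Ej) (hRRE2 : Ri * Rj * Ei = Ej * Ei)
    (hRER : Ri * Ej * Ri = Rj * Ei * Rj) :
    Ei * Rj * Ri = Ei * Ej ∧ Ei * Rj * Ei = Ei ∧ Ei * Ej * Ei = Ei :=
  brauer_simply_laced_adjacent_rels_general Ri Rj Ei Ej hRi hRj hERi hRRE1 hRRE2 hRER
end

section
/- In a Brauer algebra of simply laced type, for nodes i ∼ j ∼ k with i ≁ k, the relations EⱼEᵢRₖEⱼ = EⱼRᵢEₖEⱼ and EⱼRᵢRₖEⱼ = EⱼEᵢEₖEⱼ hold. -/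
/-!
For adjacent nodes `i ∼ j` the relations `RᵢRⱼEᵢ = EⱼEᵢ` and `RᵢEⱼRᵢ = RⱼEᵢRⱼ` give
`EⱼEᵢRⱼ = RᵢRⱼEᵢRⱼ = Rᵢ(RᵢEⱼRᵢ) = EⱼRᵢ`, i.e. `EⱼEᵢ = EⱼRᵢRⱼ`. Substituting this for `EⱼEᵢ`
turns both claimed identities into `RⱼRₖEⱼ = EₖEⱼ`, the relation for `j ∼ k`.
-/

namespace Brauer

variable {M : Type*} [Monoid M] {ri rj ei ej : M}

theorem E_mul_E_mul_R_eq_E_mul_R (hri : ri * ri = 1) (hRRE : ri * rj * ei = ej * ei)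
    (hRER : ri * ej * ri = rj * ei * rj) :
    ej * ei * rj = ej * ri :=
  calc ej * ei * rj = ri * (rj * ei * rj) := by rw [← hRRE]; simp only [mul_assoc]
    _ = ri * ri * ej * ri := by rw [← hRER]; simp only [mul_assoc]
    _ = ej * ri := by rw [hri, one_mul]

theorem E_mul_E_eq_E_mul_R_mul_R (hri : ri * ri = 1) (hrj : rj * rj = 1)
    (hRRE : ri * rj * ei = ej * ei) (hRER : ri * ej * ri = rj * ei * rj) :
    ej * ei = ej * ri * rj := by
  rw [← Brauer.E_mul_E_mul_R_eq_E_mul_R hri hRRE hRER, mul_assoc _ rj, hrj, mul_one]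

end Brauer

theorem brauer_simply_laced_triple_rels_general {A : Type*} [Ring A]
    (Ri Rj Rk Ei Ej Ek : A)
    (hRi : Ri * Ri = 1) (hRj : Rj * Rj = 1)
    -- i ∼ j
    (hRREji : Ri * Rj * Ei = Ej * Ei)
    (hRERij : Ri * Ej * Ri = Rj * Ei * Rj)
    -- j ∼ k
    (hRREkj : Rj * Rk * Ej = Ek * Ej) :
    Ej * Ei * Rk * Ej = Ej * Ri * Ek * Ej ∧
    Ej * Ri * Rk * Ej = Ej * Ei * Ek * Ej := by
  constructor
  · calc Ej * Ei * Rk * Ej = Ej * Ri * (Rj * Rk * Ej) := by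
          rw [Brauer.E_mul_E_eq_E_mul_R_mul_R hRi hRj hRREji hRERij]; simp only [mul_assoc]
      _ = Ej * Ri * Ek * Ej := by rw [hRREkj, ← mul_assoc]
  · calc Ej * Ri * Rk * Ej = Ej * Ei * (Rj * Rk * Ej) := by
          rw [← Brauer.E_mul_E_mul_R_eq_E_mul_R hRi hRREji hRERij]; simp only [mul_assoc]
      _ = Ej * Ei * Ek * Ej := by rw [hRREkj, ← mul_assoc]

/-- In a Brauer algebra of simply laced type, for nodes i ∼ j ∼ k with i ≁ k
(with generators and loop parameter δ satisfying the defining relations relevant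
to these three nodes), the relations EⱼEᵢRₖEⱼ = EⱼRᵢEₖEⱼ and
EⱼRᵢRₖEⱼ = EⱼEᵢEₖEⱼ hold. -/
theorem brauer_simply_laced_triple_rels {A : Type*} [Ring A]
    (δ Ri Rj Rk Ei Ej Ek : A)
    (hδ : ∀ x : A, δ * x = x * δ) (hδu : IsUnit δ)
    (hRi : Ri * Ri = 1) (hRj : Rj * Rj = 1) (hRk : Rk * Rk = 1)
    (hEi : Ei * Ei = δ * Ei) (hEj : Ej * Ej = δ * Ej) (hEk : Ek * Ek = δ * Ek)
    (hREi : Ri * Ei = Ei) (hERi : Ei * Ri = Ei)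
    (hREj : Rj * Ej = Ej) (hERj : Ej * Rj = Ej)
    (hREk : Rk * Ek = Ek) (hERk : Ek * Rk = Ek)
    -- i ∼ j
    (hbraidij : Ri * Rj * Ri = Rj * Ri * Rj)
    (hRREij : Rj * Ri * Ej = Ei * Ej) (hRREji : Ri * Rj * Ei = Ej * Ei)
    (hRERij : Ri * Ej * Ri = Rj * Ei * Rj)
    -- j ∼ k
    (hbraidjk : Rj * Rk * Rj = Rk * Rj * Rk)
    (hRREjk : Rk * Rj * Ek = Ej * Ek) (hRREkj : Rj * Rk * Ej = Ek * Ej)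
    (hRERjk : Rj * Ek * Rj = Rk * Ej * Rk)
    -- i ≁ k
    (hRRik : Ri * Rk = Rk * Ri)
    (hERik : Ei * Rk = Rk * Ei) (hERki : Ek * Ri = Ri * Ek)
    (hEEik : Ei * Ek = Ek * Ei) :
    Ej * Ei * Rk * Ej = Ej * Ri * Ek * Ej ∧
    Ej * Ri * Rk * Ej = Ej * Ei * Ek * Ej :=
  brauer_simply_laced_triple_rels_general Ri Rj Rk Ei Ej Ek hRi hRj hRREji hRERij hRREkj
end
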